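/- arXiv:2506.00485 — 8 statements merged into one kernel-verified Lean document; each statement's English description precedes it below -/
import Mathlib

section
/- Let x : (a,b) → ℓ²(ℝ) be a differentiable curve with values in 𝒰 (i.e. ‖x(t)‖_{ℓ²} = 1 and x_n(t) > 0 for all n, t). Define p(t) := (x_n(t)²). Then p(t) ∈ Δ for all t, p is a differentiable curve into ℓ¹ with derivative v(t) = (2 x_n(t) x_n'(t)), the sequence (v_n(t)/√p_n(t)) lies in ℓ², and the ℓ²-Fisher–Rao energy equals the spherical energy: (1/4)∑_{n=0}^∞ v_n(t)²/p_n(t) = ‖x'(t)‖_{ℓ²}² for every t. (This is the infinitesimal form of the statement that the square-root map Φ : (Δ, G^{FR}) → (𝒰, ℓ²-metric) is an isometry.) -/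
/-
Everything is coordinatewise: with `p_n = x_n²` one has `v_n = 2 x_n x_n'`, so
`v_n² / p_n = 4 x_n'²` and the Fisher–Rao energy collapses to `∑ x_n'² = ‖x'‖²`. The only
analytic input is that the pointwise product `ℓ² × ℓ² → ℓ¹` is a continuous bilinear map
(Cauchy–Schwarz), so the product rule differentiates `t ↦ x(t)²` as an `ℓ¹`-valued curve.
-/

/-- The ℓ²-probability simplex `Δ`. -/
def simplex : Set (ℕ → ℝ) :=
  {p | Summable p ∧ (∀ n, 0 < p n) ∧ ∑' n, p n = 1}

open scoped ENNReal

section PointwiseMul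

variable {ι 𝕜 : Type*} [RCLike 𝕜] {p q : ℝ≥0∞} (r : ℝ≥0∞) [p.HolderTriple q r]
  [Fact (1 ≤ p)] [Fact (1 ≤ q)] [Fact (1 ≤ r)]

noncomputable def lp.mulL :
    lp (fun _ : ι => 𝕜) p →L[𝕜] lp (fun _ : ι => 𝕜) q →L[𝕜] lp (fun _ : ι => 𝕜) r :=
  lp.holderL r (fun _ => ContinuousLinearMap.mul 𝕜 𝕜) (K := 1)
    fun _ => ContinuousLinearMap.opNorm_mul_le 𝕜 𝕜

@[simp]
theorem lp.mulL_apply (f : lp (fun _ : ι => 𝕜) p) (g : lp (fun _ : ι => 𝕜) q) (i : ι) :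
    lp.mulL r f g i = f i * g i :=
  rfl

end PointwiseMul

theorem lp.hasSum_sq_norm {ι : Type*} (f : lp (fun _ : ι => ℝ) 2) :
    HasSum (fun i => f i ^ 2) (‖f‖ ^ 2) := by
  simpa [← real_inner_self_eq_norm_sq, sq] using lp.hasSum_inner (𝕜 := ℝ) f f

theorem hasDerivAt_lp_mulL_self {ι : Type*} {x : ℝ → lp (fun _ : ι => ℝ) 2}
    {x' : lp (fun _ : ι => ℝ) 2} {t : ℝ} (hx : HasDerivAt x x' t) :
    HasDerivAt (fun s => lp.mulL 1 (x s) (x s)) (lp.mulL 1 (x t) x' + lp.mulL 1 x' (x t)) t :=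
  ContinuousLinearMap.hasDerivAt_of_bilinear (fun _ => hx) (fun _ => hx)

theorem sq_two_mul_mul_div_sq {x v : ℝ} (hx : x ≠ 0) : (2 * x * v) ^ 2 / x ^ 2 = 4 * v ^ 2 := by
  field_simp
  ring

theorem sq_two_mul_mul_div_sqrt_sq {x v : ℝ} (hx : x ≠ 0) :
    (2 * x * v / Real.sqrt (x ^ 2)) ^ 2 = 4 * v ^ 2 := by
  rw [Real.sqrt_sq_eq_abs, div_pow, sq_abs, sq_two_mul_mul_div_sq hx]

/-- if `x : (a,b) → ℓ²(ℝ)` is a differentiable curve with values in `𝒰`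
(unit sphere, strictly positive coordinates) and `p(t) := (x_n(t)²)`, then
`p(t) ∈ Δ`, `p` is a differentiable curve into `ℓ¹` with derivative
`v(t) = (2 x_n(t) x_n'(t))`, the sequence `(v_n(t)/√p_n(t))` lies in `ℓ²`, and the
ℓ²-Fisher–Rao energy equals the spherical energy:
`(1/4)∑ v_n(t)²/p_n(t) = ‖x'(t)‖²_{ℓ²}`. -/
theorem squareRootMap_isometry_infinitesimal (a b : ℝ)
    (x x' : ℝ → lp (fun _ : ℕ => ℝ) 2)
    (hderiv : ∀ t ∈ Set.Ioo a b, HasDerivAt x (x' t) t)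
    (hpos : ∀ t ∈ Set.Ioo a b, ∀ n, 0 < x t n)
    (hsph : ∀ t ∈ Set.Ioo a b, ∑' n, (x t n) ^ 2 = 1) :
    (∀ t ∈ Set.Ioo a b, (fun n => (x t n) ^ 2) ∈ simplex) ∧
    (∃ P : ℝ → lp (fun _ : ℕ => ℝ) 1,
      (∀ t ∈ Set.Ioo a b, ∀ n : ℕ, P t n = (x t n) ^ 2) ∧
      (∀ t ∈ Set.Ioo a b, ∃ V : lp (fun _ : ℕ => ℝ) 1,
        (∀ n : ℕ, V n = 2 * x t n * x' t n) ∧ HasDerivAt P V t)) ∧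
    (∀ t ∈ Set.Ioo a b,
      Summable (fun n => (2 * x t n * x' t n / Real.sqrt ((x t n) ^ 2)) ^ 2)) ∧
    (∀ t ∈ Set.Ioo a b,
      (1 / 4) * ∑' n, (2 * x t n * x' t n) ^ 2 / (x t n) ^ 2 = ‖x' t‖ ^ 2) := by
  refine ⟨fun t ht => ?_, ⟨fun t => lp.mulL 1 (x t) (x t), fun t _ n => (sq (x t n)).symm,
    fun t ht => ⟨_, fun n => ?_, hasDerivAt_lp_mulL_self (hderiv t ht)⟩⟩, fun t ht => ?_,
    fun t ht => ?_⟩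
  · exact ⟨(lp.hasSum_sq_norm (x t)).summable, fun n => pow_pos (hpos t ht n) 2, hsph t ht⟩
  · simp only [lp.coeFn_add, Pi.add_apply, lp.mulL_apply]
    ring
  · simp_rw [sq_two_mul_mul_div_sqrt_sq (hpos t ht _).ne']
    exact (lp.hasSum_sq_norm (x' t)).summable.mul_left 4
  · simp_rw [sq_two_mul_mul_div_sq (hpos t ht _).ne', tsum_mul_left,
      (lp.hasSum_sq_norm (x' t)).tsum_eq]
    ring
end

section
/- Let x ≠ y be two points of 𝒰. Then 0 < ⟨x,y⟩_{ℓ²} < 1, so θ := arccos⟨x,y⟩_{ℓ²} ∈ (0, π/2), and the great-circle arc γ(t) := (sin((1−t)θ)·x + sin(tθ)·y)/sin(θ), t ∈ [0,1], satisfies γ(0) = x, γ(1) = y, ‖γ(t)‖_{ℓ²} = 1 and γ(t)_n > 0 for all n and all t ∈ [0,1]; thus γ is a minimizing spherical geodesic from x to y lying entirely in 𝒰, of length θ equal to the spherical distance between x and y. Consequently the ℓ²-probability simplex equipped with the ℓ²-Fisher–Rao metric is geodesically convex. -/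
lemma trig_key (A B : ℝ) :
    Real.sin A ^ 2 + 2 * Real.sin A * Real.sin B * Real.cos (A + B) + Real.sin B ^ 2
      = Real.sin (A + B) ^ 2 := by
  rw [Real.sin_add, Real.cos_add]
  nlinarith [Real.sin_sq_add_cos_sq A, Real.sin_sq_add_cos_sq B]

/-- The set `𝒰` of strictly positive points of the unit sphere of `ℓ²(ℝ)`. -/
def posSphere : Set (ℕ → ℝ) :=
  {x | Summable (fun n => x n ^ 2) ∧ (∀ n, 0 < x n) ∧ ∑' n, x n ^ 2 = 1}

/-- for distinct `x, y ∈ 𝒰` one has `0 < ⟨x,y⟩ < 1`, so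
`θ := arccos⟨x,y⟩ ∈ (0, π/2)`, and the great-circle arc
`γ(t) = (sin((1−t)θ)x + sin(tθ)y)/sin θ` satisfies `γ(0) = x`, `γ(1) = y`,
`‖γ(t)‖_{ℓ²} = 1` and `γ(t)_n > 0` for all `n` and `t ∈ [0,1]`; hence `𝒰` (and thus
the ℓ²-probability simplex with the ℓ²-Fisher–Rao metric) is geodesically convex. -/
theorem posSphere_geodesically_convex (x y : ℕ → ℝ)
    (hx : x ∈ posSphere) (hy : y ∈ posSphere) (hxy : x ≠ y) :
    0 < ∑' n, x n * y n ∧ (∑' n, x n * y n) < 1 ∧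
    (0 < Real.arccos (∑' n, x n * y n) ∧
     Real.arccos (∑' n, x n * y n) < Real.pi / 2) ∧
    (fun n => (Real.sin ((1 - (0:ℝ)) * Real.arccos (∑' m, x m * y m)) * x n +
        Real.sin ((0:ℝ) * Real.arccos (∑' m, x m * y m)) * y n) /
        Real.sin (Real.arccos (∑' m, x m * y m))) = x ∧
    (fun n => (Real.sin ((1 - (1:ℝ)) * Real.arccos (∑' m, x m * y m)) * x n +
        Real.sin ((1:ℝ) * Real.arccos (∑' m, x m * y m)) * y n) /
        Real.sin (Real.arccos (∑' m, x m * y m))) = y ∧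
    ∀ t ∈ Set.Icc (0:ℝ) 1,
      (∑' n, ((Real.sin ((1 - t) * Real.arccos (∑' m, x m * y m)) * x n +
          Real.sin (t * Real.arccos (∑' m, x m * y m)) * y n) /
          Real.sin (Real.arccos (∑' m, x m * y m))) ^ 2 = 1) ∧
      ∀ n, 0 < (Real.sin ((1 - t) * Real.arccos (∑' m, x m * y m)) * x n +
          Real.sin (t * Real.arccos (∑' m, x m * y m)) * y n) /
          Real.sin (Real.arccos (∑' m, x m * y m)) := by
  obtain ⟨hxS, hxpos, hxsum⟩ := hx
  obtain ⟨hyS, hypos, hysum⟩ := hy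
  have hxyS : Summable (fun n => x n * y n) := by
    refine Summable.of_nonneg_of_le (fun n => (mul_pos (hxpos n) (hypos n)).le)
      (fun n => ?_) ((hxS.add hyS).div_const 2)
    nlinarith [sq_nonneg (x n - y n)]
  set s := ∑' n, x n * y n with hs_def
  have hs0 : 0 < s := Summable.tsum_pos hxyS (fun n => (mul_pos (hxpos n) (hypos n)).le) 0
    (mul_pos (hxpos 0) (hypos 0))
  have hdS : Summable (fun n => (x n - y n) ^ 2) := by
    have h : (fun n => (x n - y n) ^ 2)
        = fun n => x n ^ 2 - 2 * (x n * y n) + y n ^ 2 := by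
      funext n; ring
    rw [h]
    exact (hxS.sub (hxyS.mul_left 2)).add hyS
  have hdsum : ∑' n, (x n - y n) ^ 2 = 2 - 2 * s := by
    have h : (fun n => (x n - y n) ^ 2)
        = fun n => x n ^ 2 - 2 * (x n * y n) + y n ^ 2 := by
      funext n; ring
    rw [h, Summable.tsum_add (hxS.sub (hxyS.mul_left 2)) hyS,
      Summable.tsum_sub hxS (hxyS.mul_left 2), tsum_mul_left, hxsum, hysum, ← hs_def]
    ring
  have hs1 : s < 1 := by
    obtain ⟨n0, hn0⟩ : ∃ n, x n ≠ y n := by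
      by_contra h
      push_neg at h
      exact hxy (funext h)
    have hpos : 0 < ∑' n, (x n - y n) ^ 2 :=
      Summable.tsum_pos hdS (fun n => sq_nonneg _) n0 (by have := sub_ne_zero.mpr hn0; positivity)
    rw [hdsum] at hpos
    linarith
  set θ := Real.arccos s with hθ_def
  have hθ0 : 0 < θ := Real.arccos_pos.mpr hs1
  have hθπ2 : θ < Real.pi / 2 := Real.arccos_lt_pi_div_two.mpr hs0
  have hθπ : θ < Real.pi := by linarith [Real.pi_pos]
  have hsin : 0 < Real.sin θ := Real.sin_pos_of_pos_of_lt_pi hθ0 hθπ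
  have hcos : Real.cos θ = s := Real.cos_arccos (by linarith) hs1.le
  refine ⟨hs0, hs1, ⟨hθ0, hθπ2⟩, ?_, ?_, ?_⟩
  · funext n
    simp only [sub_zero, one_mul, zero_mul, Real.sin_zero, zero_mul, add_zero]
    rw [mul_comm, mul_div_assoc, div_self hsin.ne', mul_one]
  · funext n
    simp only [sub_self, zero_mul, Real.sin_zero, zero_mul, one_mul, zero_add]
    rw [mul_comm, mul_div_assoc, div_self hsin.ne', mul_one]
  · rintro t ⟨ht0, ht1⟩
    set a := Real.sin ((1 - t) * θ) with ha_def
    set b := Real.sin (t * θ) with hb_def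
    have ha0 : 0 ≤ a := Real.sin_nonneg_of_nonneg_of_le_pi
      (by nlinarith) (by nlinarith [Real.pi_pos])
    have hb0 : 0 ≤ b := Real.sin_nonneg_of_nonneg_of_le_pi
      (by nlinarith) (by nlinarith [Real.pi_pos])
    have hab : 0 < a ∨ 0 < b := by
      rcases lt_or_eq_of_le ht1 with h | h
      · left
        exact Real.sin_pos_of_pos_of_lt_pi (by nlinarith) (by nlinarith [Real.pi_pos])
      · right
        rw [hb_def, h, one_mul]
        exact hsin
    have key : a ^ 2 + 2 * a * b * s + b ^ 2 = Real.sin θ ^ 2 := by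
      have h := trig_key ((1 - t) * θ) (t * θ)
      rw [show (1 - t) * θ + t * θ = θ by ring, hcos] at h
      exact h
    constructor
    · have hrw : (fun n => ((a * x n + b * y n) / Real.sin θ) ^ 2)
          = fun n => (a / Real.sin θ) ^ 2 * x n ^ 2 +
            ((2 * a * b / Real.sin θ ^ 2) * (x n * y n) +
              (b / Real.sin θ) ^ 2 * y n ^ 2) := by
        funext n
        field_simp
        ring
      rw [hrw, Summable.tsum_add (hxS.mul_left _) ((hxyS.mul_left _).add (hyS.mul_left _)),
        Summable.tsum_add (hxyS.mul_left _) (hyS.mul_left _), tsum_mul_left, tsum_mul_left,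
        tsum_mul_left, hxsum, hysum, ← hs_def]
      field_simp
      linarith [key]
    · intro n
      apply div_pos _ hsin
      rcases hab with h | h
      · nlinarith [mul_pos h (hxpos n), mul_nonneg hb0 (hypos n).le]
      · nlinarith [mul_pos h (hypos n), mul_nonneg ha0 (hxpos n).le]
end

section
/- Let (c_n) ∈ ℓ²(ℝ), (p_n(0)) ∈ Δ, and define p_n(t) := p_n(0) e^{c_n t} / ∑_{k=0}^∞ p_k(0) e^{c_k t} for t ≥ 0. Then for each n the function t ↦ p_n(t) is differentiable on [0,∞) and satisfies the ℓ²-Fisher–Rao gradient-flow equation d/dt p_n(t) = p_n(t) c_n − (∑_{k=0}^∞ c_k p_k(t)) · p_n(t), with initial condition p_n(0). That is, the curves (p_n(t)) are the gradient flow lines of the linear functional F_c(p) = ∑ c_n p_n with respect to the ℓ²-Fisher–Rao metric on Δ. -/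
/-- The ℓ²-Fisher–Rao gradient flow of the linear functional `F_c`:
`p_n(t) = p_n(0) e^{c_n t} / ∑_k p_k(0) e^{c_k t}`. -/
noncomputable def flow (c p0 : ℕ → ℝ) (t : ℝ) (n : ℕ) : ℝ :=
  p0 n * Real.exp (c n * t) / ∑' k, p0 k * Real.exp (c k * t)

/-! A square-summable `c` is bounded, so on every bounded interval of times the series
`Z(t) = ∑ₖ pₖ e^{cₖ t}` and its termwise derivative are dominated by a multiple of `∑ₖ |pₖ|`.
Hence `Z` may be differentiated term by term, `Z' = ∑ₖ cₖ pₖ e^{cₖ t}`, and the flow equation is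
the quotient rule for `pₙ e^{cₙ t} / Z(t)`. -/

open Real

lemma exists_abs_le_of_summable_sq {c : ℕ → ℝ} (hc : Summable fun n => c n ^ 2) :
    ∃ M, ∀ n, |c n| ≤ M := by
  obtain ⟨B, hB⟩ := hc.tendsto_atTop_zero.bddAbove_range
  refine ⟨1 + B, fun n => ?_⟩
  have hcB : c n ^ 2 ≤ B := hB ⟨n, rfl⟩
  -- `|x| ≤ 1 + x ^ 2` for every real `x`
  nlinarith [abs_nonneg (c n), sq_abs (c n)]

lemma exp_mul_le_exp_mul_of_abs_le {a b M r : ℝ} (ha : |a| ≤ M) (hb : |b| ≤ r) :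
    exp (a * b) ≤ exp (M * r) :=
  exp_le_exp.2 <| (le_abs_self _).trans <| by
    rw [abs_mul]; exact mul_le_mul ha hb (abs_nonneg _) ((abs_nonneg _).trans ha)

lemma hasDerivAt_const_mul_exp_mul (a b y : ℝ) :
    HasDerivAt (fun x => a * exp (b * x)) (a * b * exp (b * y)) y := by
  refine (((hasDerivAt_id y).const_mul b).exp.const_mul a).congr_deriv ?_
  simp only [id, mul_one]
  ring

noncomputable def partitionFunction (c p : ℕ → ℝ) (t : ℝ) : ℝ :=
  ∑' k, p k * exp (c k * t)

lemma flow_eq (c p : ℕ → ℝ) (t : ℝ) (n : ℕ) :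
    flow c p t n = p n * exp (c n * t) / partitionFunction c p t := rfl

lemma tsum_mul_flow (c p : ℕ → ℝ) (t : ℝ) :
    ∑' k, c k * flow c p t k = (∑' k, p k * c k * exp (c k * t)) / partitionFunction c p t := by
  rw [← tsum_div_const]
  congr 1 with k
  rw [flow_eq]
  ring

section BoundedCoefficients

variable {c p : ℕ → ℝ} {M : ℝ}

lemma summable_mul_exp_mul (hM : ∀ k, |c k| ≤ M) (hp : Summable p) (t : ℝ) :
    Summable fun k => p k * exp (c k * t) :=
  .of_norm_bounded (hp.abs.mul_right (exp (M * |t|))) fun k => by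
    rw [norm_mul, norm_of_nonneg (exp_pos _).le]
    exact mul_le_mul_of_nonneg_left (exp_mul_le_exp_mul_of_abs_le (hM k) le_rfl) (abs_nonneg _)

lemma hasDerivAt_partitionFunction (hM : ∀ k, |c k| ≤ M) (hp : Summable p) (t : ℝ) :
    HasDerivAt (partitionFunction c p) (∑' k, p k * c k * exp (c k * t)) t := by
  have hM0 : 0 ≤ M := (abs_nonneg _).trans (hM 0)
  refine hasDerivAt_tsum_of_isPreconnected (hp.abs.mul_right (M * exp (M * (|t| + 1))))
    Metric.isOpen_ball (convex_ball t 1).isPreconnected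
    (fun k y _ => hasDerivAt_const_mul_exp_mul (p k) (c k) y) (fun k y hy => ?_)
    (Metric.mem_ball_self one_pos) (summable_mul_exp_mul hM hp t) (Metric.mem_ball_self one_pos)
  have hy : |y| ≤ |t| + 1 := by
    have := abs_sub_abs_le_abs_sub y t
    rw [Metric.mem_ball, dist_eq_norm, norm_eq_abs] at hy
    linarith
  rw [norm_mul, norm_mul, norm_of_nonneg (exp_pos _).le, mul_assoc]
  exact mul_le_mul_of_nonneg_left
    (mul_le_mul (hM k) (exp_mul_le_exp_mul_of_abs_le (hM k) hy) (exp_pos _).le hM0) (abs_nonneg _)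

lemma partitionFunction_pos (hM : ∀ k, |c k| ≤ M) (hp : Summable p) (hpos : ∀ k, 0 < p k)
    (t : ℝ) : 0 < partitionFunction c p t :=
  (summable_mul_exp_mul hM hp t).tsum_pos (fun k => (mul_pos (hpos k) (exp_pos _)).le) 0
    (mul_pos (hpos 0) (exp_pos _))

lemma hasDerivAt_flow (hM : ∀ k, |c k| ≤ M) (hp : Summable p) (hpos : ∀ k, 0 < p k)
    (t : ℝ) (n : ℕ) :
    HasDerivAt (fun s => flow c p s n)
      (flow c p t n * c n - (∑' k, c k * flow c p t k) * flow c p t n) t := by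
  have hZ := (partitionFunction_pos hM hp hpos t).ne'
  refine ((hasDerivAt_const_mul_exp_mul (p n) (c n) t).div
    (hasDerivAt_partitionFunction hM hp t) hZ).congr_deriv ?_
  rw [tsum_mul_flow, flow_eq]
  field_simp

end BoundedCoefficients

lemma flow_zero {c p : ℕ → ℝ} (hp : ∑' k, p k = 1) (n : ℕ) : flow c p 0 n = p n := by
  simp [flow, hp]

/-- each component `t ↦ p_n(t)` of the curve
`p_n(t) = p_n(0)e^{c_n t}/∑_k p_k(0)e^{c_k t}` is differentiable on `[0,∞)` and
satisfies the ℓ²-Fisher–Rao gradient-flow equation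
`d/dt p_n(t) = p_n(t) c_n − (∑_k c_k p_k(t)) p_n(t)`, with initial condition `p_n(0)`. -/
theorem flow_is_gradient_flow (c p0 : ℕ → ℝ)
    (hc : Summable (fun n => c n ^ 2)) (hp0 : p0 ∈ simplex) :
    (∀ n, flow c p0 0 n = p0 n) ∧
    ∀ (n : ℕ) (t : ℝ), 0 ≤ t →
      HasDerivAt (fun s => flow c p0 s n)
        (flow c p0 t n * c n - (∑' k, c k * flow c p0 t k) * flow c p0 t n) t := by
  obtain ⟨hsum, hpos, hone⟩ := hp0
  obtain ⟨M, hM⟩ := exists_abs_le_of_summable_sq hc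
  exact ⟨flow_zero hone, fun n t _ => hasDerivAt_flow hM hsum hpos t n⟩
end

section
/- Let (c_n) ∈ ℓ²(ℝ) be strictly monotonically decreasing, let (p_n(0)) ∈ Δ, and define p_n(t) := p_n(0) e^{c_n t} / ∑_{k=0}^∞ p_k(0) e^{c_k t}. Then p(t) converges in the ℓ¹ norm, as t → ∞, to the point e_0 = (1, 0, 0, …) ∈ Δ̄, and e_0 maximizes the functional p ↦ ∑_{n=0}^∞ c_n p_n over the closed simplex Δ̄. -/
/-- The closed ℓ²-probability simplex `Δ̄`. -/
def closedSimplex : Set (ℕ → ℝ) :=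
  {p | Summable p ∧ (∀ n, 0 ≤ p n) ∧ ∑' n, p n = 1}

/-- The corner point `e₀ = (1, 0, 0, …)`. -/
def e0 : ℕ → ℝ := fun n => if n = 0 then 1 else 0

/-!
Adding the same constant to every `cₙ` leaves the flow unchanged, so we may take `c₀ = 0` and
`cₙ < 0` for `n ≠ 0`. Then the partition function `∑ₖ pₖ(0) e^{cₖ t}` tends to `p₀(0)` by dominated
convergence, hence `p₀(t) → 1`. On the closed simplex the ℓ¹ distance to `e₀` is `2 (1 - q₀)`,
which gives the convergence. A square-summable decreasing sequence is nonnegative, so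
`∑ cₙ rₙ ≤ c₀ ∑ rₙ = c₀` on the closed simplex.
-/

open Filter Topology Real

lemma simplex_subset_closedSimplex : simplex ⊆ closedSimplex :=
  fun _ ⟨hs, hpos, hsum⟩ => ⟨hs, fun n => (hpos n).le, hsum⟩

lemma e0_mem_closedSimplex : e0 ∈ closedSimplex := by
  refine ⟨(hasSum_ite_eq 0 (1 : ℝ)).summable, fun n => ?_, (hasSum_ite_eq 0 (1 : ℝ)).tsum_eq⟩
  unfold e0
  split_ifs <;> norm_num

lemma tsum_mul_e0 (c : ℕ → ℝ) : ∑' n, c n * e0 n = c 0 := by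
  simp only [e0, mul_ite, mul_one, mul_zero]
  exact tsum_ite_eq 0 c

lemma tsum_abs_sub_e0 {q : ℕ → ℝ} (hq : q ∈ closedSimplex) :
    ∑' n, |q n - e0 n| = 2 * (1 - q 0) := by
  obtain ⟨hs, hnonneg, hsum⟩ := hq
  have hsplit : q 0 + ∑' k, q (k + 1) = 1 := hsum ▸ (hs.tsum_eq_zero_add).symm
  have hq0 : q 0 ≤ 1 := hsum ▸ hs.le_tsum 0 fun n _ => hnonneg n
  have htail : ∀ k, |q (k + 1) - e0 (k + 1)| = q (k + 1) := fun k => by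
    simp [e0, abs_of_nonneg (hnonneg (k + 1))]
  rw [((hs.sub e0_mem_closedSimplex.1).abs).tsum_eq_zero_add, tsum_congr htail]
  simp only [e0, if_true]
  rw [abs_of_nonpos (by linarith)]
  linarith

lemma tsum_mul_le_of_antitone {c r : ℕ → ℝ} (hc : Antitone c) (hc_nonneg : ∀ n, 0 ≤ c n)
    (hr : r ∈ closedSimplex) : ∑' n, c n * r n ≤ c 0 := by
  obtain ⟨hrs, hr_nonneg, hrsum⟩ := hr
  have hle : ∀ n, c n * r n ≤ c 0 * r n :=
    fun n => mul_le_mul_of_nonneg_right (hc (Nat.zero_le n)) (hr_nonneg n)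
  calc ∑' n, c n * r n ≤ ∑' n, c 0 * r n :=
        Summable.tsum_le_tsum hle
          (.of_nonneg_of_le (fun n => mul_nonneg (hc_nonneg n) (hr_nonneg n)) hle
            (hrs.mul_left (c 0)))
          (hrs.mul_left (c 0))
    _ = c 0 := by rw [tsum_mul_left, hrsum, mul_one]

lemma flow_sub_const (c p0 : ℕ → ℝ) (a t : ℝ) :
    flow (fun n => c n - a) p0 t = flow c p0 t := by
  have hshift : ∀ k, p0 k * exp ((c k - a) * t) = p0 k * exp (c k * t) * exp (-(a * t)) :=
    fun k => by rw [mul_assoc, ← exp_add]; ring_nf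
  funext n
  simp only [flow, hshift, tsum_mul_right]
  exact mul_div_mul_right _ _ (exp_pos _).ne'

lemma flow_mem_simplex {c p0 : ℕ → ℝ} (hc : BddAbove (Set.range c)) (hp0 : p0 ∈ simplex)
    {t : ℝ} (ht : 0 ≤ t) : flow c p0 t ∈ simplex := by
  obtain ⟨hs, hpos, -⟩ := hp0
  obtain ⟨C, hC⟩ := hc
  have hterm_pos : ∀ k, 0 < p0 k * exp (c k * t) := fun k => mul_pos (hpos k) (exp_pos _)
  have hZs : Summable fun k => p0 k * exp (c k * t) :=
    .of_nonneg_of_le (fun k => (hterm_pos k).le)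
      (fun k => mul_le_mul_of_nonneg_left
        (exp_le_exp.mpr (mul_le_mul_of_nonneg_right (hC ⟨k, rfl⟩) ht)) (hpos k).le)
      (hs.mul_right (exp (C * t)))
  have hZpos : 0 < ∑' k, p0 k * exp (c k * t) :=
    hZs.tsum_pos (fun k => (hterm_pos k).le) 0 (hterm_pos 0)
  exact ⟨hZs.div_const _, fun n => div_pos (hterm_pos n) hZpos,
    by simp only [flow, tsum_div_const]; exact div_self hZpos.ne'⟩

lemma tendsto_tsum_mul_exp {p d : ℕ → ℝ} (hp : Summable p) (hd0 : d 0 = 0)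
    (hd : ∀ n ≠ 0, d n < 0) :
    Tendsto (fun t => ∑' k, p k * exp (d k * t)) atTop (𝓝 (p 0)) := by
  have hterm : ∀ k, Tendsto (fun t => p k * exp (d k * t)) atTop
      (𝓝 (if k = 0 then p k else 0)) := by
    intro k
    split_ifs with hk
    · subst hk
      simp [hd0]
    · simpa using ((tendsto_exp_atBot.comp
        (tendsto_id.const_mul_atTop_of_neg (hd k hk))).const_mul (p k))
  rw [← tsum_ite_eq 0 p]
  refine tendsto_tsum_of_dominated_convergence (summable_abs_iff.mpr hp) hterm ?_
  filter_upwards [eventually_ge_atTop 0] with t ht k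
  rw [norm_mul, norm_of_nonneg (exp_pos _).le, Real.norm_eq_abs]
  refine mul_le_of_le_one_right (abs_nonneg _) (exp_le_one_iff.mpr ?_)
  rcases eq_or_ne k 0 with rfl | hk
  · simp [hd0]
  · exact mul_nonpos_of_nonpos_of_nonneg (hd k hk).le ht

lemma tendsto_flow_apply_zero {c p0 : ℕ → ℝ} (hc : ∀ n ≠ 0, c n < c 0) (hp : Summable p0)
    (hp00 : p0 0 ≠ 0) : Tendsto (fun t => flow c p0 t 0) atTop (𝓝 1) := by
  have hZ := tendsto_tsum_mul_exp hp (d := fun n => c n - c 0) (sub_self _)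
    fun n hn => sub_neg.mpr (hc n hn)
  simp_rw [← flow_sub_const c p0 (c 0), flow, sub_self, zero_mul, exp_zero, mul_one]
  rw [← div_self hp00]
  exact tendsto_const_nhds.div hZ hp00

lemma nonneg_of_summable_sq_of_antitone {c : ℕ → ℝ} (hc : Summable fun n => c n ^ 2)
    (hmono : Antitone c) (n : ℕ) : 0 ≤ c n := by
  have hsq : Tendsto (fun n => c n ^ 2) atTop (𝓝 0) := hc.tendsto_atTop_zero
  have habs : Tendsto (fun n => |c n|) atTop (𝓝 0) := by
    simpa [Function.comp_def, sqrt_sq_eq_abs] using (continuous_sqrt.tendsto 0).comp hsq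
  exact hmono.le_of_tendsto ((tendsto_zero_iff_abs_tendsto_zero c).mpr habs) n

/-- if `(c_n) ∈ ℓ²` is strictly decreasing and `p(0) ∈ Δ`, then the
gradient flow `p(t)` converges in ℓ¹ norm, as `t → ∞`, to `e₀ = (1,0,0,…) ∈ Δ̄`, and
`e₀` maximizes `p ↦ ∑ c_n p_n` over `Δ̄`. -/
theorem flow_converges_to_maximizer (c p0 : ℕ → ℝ)
    (hc : Summable (fun n => c n ^ 2)) (hmono : StrictAnti c) (hp0 : p0 ∈ simplex) :
    Filter.Tendsto (fun t => ∑' n, |flow c p0 t n - e0 n|) Filter.atTop (nhds 0) ∧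
    e0 ∈ closedSimplex ∧
    ∀ r ∈ closedSimplex, (∑' n, c n * r n) ≤ ∑' n, c n * e0 n := by
  refine ⟨?_, e0_mem_closedSimplex, fun r hr => ?_⟩
  · have hbdd : BddAbove (Set.range c) :=
      ⟨c 0, by rintro _ ⟨n, rfl⟩; exact hmono.antitone (Nat.zero_le n)⟩
    have hdist : ∀ᶠ t in atTop, 2 * (1 - flow c p0 t 0) = ∑' n, |flow c p0 t n - e0 n| := by
      filter_upwards [eventually_ge_atTop 0] with t ht
      exact (tsum_abs_sub_e0 (simplex_subset_closedSimplex (flow_mem_simplex hbdd hp0 ht))).symm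
    have hflow0 := tendsto_flow_apply_zero (c := c)
      (fun n hn => hmono (Nat.pos_of_ne_zero hn)) hp0.1 (hp0.2.1 0).ne'
    simpa using ((hflow0.const_sub 1).const_mul 2).congr' hdist
  · rw [tsum_mul_e0]
    exact tsum_mul_le_of_antitone hmono.antitone
      (nonneg_of_summable_sq_of_antitone hc hmono.antitone) hr
end

section
/- Let (c_n) ∈ ℓ²(ℝ) be strictly monotonically decreasing, let (p_n(0)) ∈ Δ, and define p_n(t) := p_n(0) e^{c_n t} / ∑_{k=0}^∞ p_k(0) e^{c_k t}. Then the convergence to the maximizer e_0 = (1,0,0,…) is exponentially fast: for all t ≥ 0, ‖p(t) − e_0‖_{ℓ¹} = 2(1 − p_0(t)) ≤ 2 · ((1 − p_0(0))/p_0(0)) · e^{−(c_0 − c_1) t}, where c_0 − c_1 > 0. -/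
/-- for strictly decreasing `(c_n) ∈ ℓ²` and `p(0) ∈ Δ`, the
convergence of the gradient flow to `e₀` is exponentially fast: `c₀ − c₁ > 0` and
for all `t ≥ 0`, `‖p(t) − e₀‖_{ℓ¹} = 2(1 − p₀(t)) ≤ 2((1 − p₀(0))/p₀(0)) e^{−(c₀−c₁)t}`. -/
theorem flow_converges_exponentially (c p0 : ℕ → ℝ)
    (hc : Summable (fun n => c n ^ 2)) (hmono : StrictAnti c) (hp0 : p0 ∈ simplex) :
    0 < c 0 - c 1 ∧
    ∀ t : ℝ, 0 ≤ t →
      (∑' n, |flow c p0 t n - e0 n|) = 2 * (1 - flow c p0 t 0) ∧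
      2 * (1 - flow c p0 t 0) ≤
        2 * ((1 - p0 0) / p0 0) * Real.exp (-(c 0 - c 1) * t) := by
  obtain ⟨hp_sum, hp_pos, hp_tsum⟩ := hp0
  have hc01 : 0 < c 0 - c 1 := sub_pos.mpr (hmono (by norm_num))
  refine ⟨hc01, fun t ht => ?_⟩
  set f : ℕ → ℝ := fun n => p0 n * Real.exp (c n * t) with hf
  have hfpos : ∀ n, 0 < f n := fun n => mul_pos (hp_pos n) (Real.exp_pos _)
  have hfsum : Summable f := by
    refine Summable.of_nonneg_of_le (fun n => (hfpos n).le) (fun n => ?_)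
      (hp_sum.mul_right (Real.exp (c 0 * t)))
    exact mul_le_mul_of_nonneg_left (Real.exp_le_exp.mpr
      (mul_le_mul_of_nonneg_right (hmono.antitone (Nat.zero_le n)) ht)) (hp_pos n).le
  set Z : ℝ := ∑' k, f k with hZ
  have hZpos : 0 < Z := Summable.tsum_pos hfsum (fun n => (hfpos n).le) 0 (hfpos 0)
  have hfsum' : Summable (fun n => f (n + 1)) := (summable_nat_add_iff 1).2 hfsum
  have hZsplit : Z = f 0 + ∑' n, f (n + 1) := Summable.tsum_eq_zero_add hfsum
  have hS_pos : 0 < ∑' n, f (n + 1) :=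
    Summable.tsum_pos hfsum' (fun n => (hfpos _).le) 0 (hfpos 1)
  have hflow_eq : ∀ n, flow c p0 t n = f n / Z := fun n => rfl
  have hflow_sum : Summable (fun n => flow c p0 t n) := by
    simp only [hflow_eq]; exact hfsum.div_const Z
  have hflow_tsum : ∑' n, flow c p0 t n = 1 := by
    simp only [hflow_eq]
    rw [tsum_div_const]
    exact div_self hZpos.ne'
  have hflow_pos : ∀ n, 0 < flow c p0 t n := fun n => by
    rw [hflow_eq]; exact div_pos (hfpos n) hZpos
  have hflow0_lt : flow c p0 t 0 < 1 := by
    rw [hflow_eq, div_lt_one hZpos]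
    linarith
  -- summability of e0 and the absolute-difference sequence
  have he0sum : Summable e0 := by
    apply summable_of_ne_finset_zero (s := {0})
    intro n hn
    simp only [Finset.mem_singleton] at hn
    simp [e0, hn]
  have hgsum : Summable (fun n => |flow c p0 t n - e0 n|) := (hflow_sum.sub he0sum).abs
  -- the equality
  have htailsum : ∑' n, flow c p0 t (n + 1) = 1 - flow c p0 t 0 := by
    have h := Summable.tsum_eq_zero_add hflow_sum
    rw [hflow_tsum] at h
    linarith
  have h1 : ∑' n, |flow c p0 t n - e0 n| = 2 * (1 - flow c p0 t 0) := by
    rw [Summable.tsum_eq_zero_add hgsum]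
    have h0 : |flow c p0 t 0 - e0 0| = 1 - flow c p0 t 0 := by
      have : e0 0 = 1 := rfl
      rw [this, abs_sub_comm, abs_of_nonneg (by linarith)]
    have htail : (fun n => |flow c p0 t (n + 1) - e0 (n + 1)|)
        = fun n => flow c p0 t (n + 1) := by
      funext n
      have : e0 (n + 1) = 0 := rfl
      rw [this, sub_zero, abs_of_nonneg (hflow_pos (n + 1)).le]
    rw [h0, htail, htailsum]
    ring
  refine ⟨h1, ?_⟩
  -- the inequality
  have hp0_lt1 : p0 0 < 1 := by
    have h := Summable.tsum_eq_zero_add hp_sum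
    rw [hp_tsum] at h
    have : 0 < ∑' n, p0 (n + 1) :=
      Summable.tsum_pos ((summable_nat_add_iff 1).2 hp_sum) (fun n => (hp_pos _).le) 0 (hp_pos 1)
    linarith
  have hp0tail : ∑' n, p0 (n + 1) = 1 - p0 0 := by
    have h := Summable.tsum_eq_zero_add hp_sum
    rw [hp_tsum] at h
    linarith
  have htail_le : ∑' n, f (n + 1) ≤ (1 - p0 0) * Real.exp (c 1 * t) := by
    have hb : Summable (fun n => p0 (n + 1) * Real.exp (c 1 * t)) :=
      ((summable_nat_add_iff 1).2 hp_sum).mul_right _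
    have hle : ∀ n, f (n + 1) ≤ p0 (n + 1) * Real.exp (c 1 * t) := fun n =>
      mul_le_mul_of_nonneg_left (Real.exp_le_exp.mpr
        (mul_le_mul_of_nonneg_right (hmono.antitone (Nat.le_add_left 1 n)) ht))
        (hp_pos _).le
    calc ∑' n, f (n + 1) ≤ ∑' n, p0 (n + 1) * Real.exp (c 1 * t) :=
          Summable.tsum_le_tsum hle hfsum' hb
      _ = (∑' n, p0 (n + 1)) * Real.exp (c 1 * t) := tsum_mul_right
      _ = (1 - p0 0) * Real.exp (c 1 * t) := by rw [hp0tail]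
  have hZge : p0 0 * Real.exp (c 0 * t) ≤ Z := by
    have : f 0 = p0 0 * Real.exp (c 0 * t) := rfl
    linarith [hZsplit, hS_pos]
  have h1f : 1 - flow c p0 t 0 = (∑' n, f (n + 1)) / Z := by
    rw [hflow_eq]
    field_simp
    linarith
  have hbound : 1 - flow c p0 t 0 ≤ (1 - p0 0) / p0 0 * Real.exp (-(c 0 - c 1) * t) := by
    rw [h1f]
    calc (∑' n, f (n + 1)) / Z
        ≤ ((1 - p0 0) * Real.exp (c 1 * t)) / (p0 0 * Real.exp (c 0 * t)) :=
          div_le_div₀ (mul_nonneg (by linarith) (Real.exp_pos _).le) htail_le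
            (mul_pos (hp_pos 0) (Real.exp_pos _)) hZge
      _ = (1 - p0 0) / p0 0 * Real.exp (-(c 0 - c 1) * t) := by
          rw [show -(c 0 - c 1) * t = c 1 * t - c 0 * t by ring, Real.exp_sub]
          field_simp
  have h2 := mul_le_mul_of_nonneg_left hbound (by norm_num : (0:ℝ) ≤ 2)
  linarith
end

section
/- Let (c_n) ∈ ℓ²(ℝ) and define, for p in the closed ℓ²-probability simplex Δ̄, the vector field W_c(p) with components W_c(p)_n = p_n c_n − (∑_{k=0}^∞ c_k p_k) p_n. Then W_c(p) ∈ ℓ¹ for every p ∈ Δ̄, and W_c satisfies the global Lipschitz estimate ‖W_c(p) − W_c(q)‖_{ℓ¹} ≤ 3 (sup_n |c_n|) · ‖p − q‖_{ℓ¹} for all p, q ∈ Δ̄. -/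
/-- The ℓ²-Fisher–Rao gradient vector field of the linear objective:
`W_c(p)_n = p_n c_n − (∑_k c_k p_k) p_n`. -/
noncomputable def W (c p : ℕ → ℝ) (n : ℕ) : ℝ :=
  p n * c n - (∑' k, c k * p k) * p n

open Filter

lemma bddAbove_range_abs_of_summable_sq {c : ℕ → ℝ} (hc : Summable fun n => c n ^ 2) :
    BddAbove (Set.range fun n => |c n|) := by
  have h : Tendsto (fun n => √(c n ^ 2)) atTop (nhds (√0)) := hc.tendsto_atTop_zero.sqrt
  simp only [Real.sqrt_sq_eq_abs] at h
  exact h.bddAbove_range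

section WeightedSums

variable {ι : Type*} {c u : ι → ℝ} {M : ℝ}

lemma summable_mul_of_abs_le (hM : ∀ i, |c i| ≤ M) (hu : Summable fun i => |u i|) :
    Summable fun i => c i * u i :=
  Summable.of_norm_bounded (g := fun i => M * |u i|) (hu.mul_left M) fun i => by
    rw [Real.norm_eq_abs, abs_mul]
    exact mul_le_mul_of_nonneg_right (hM i) (abs_nonneg _)

lemma abs_tsum_mul_le (hM : ∀ i, |c i| ≤ M) (hu : Summable fun i => |u i|) :
    |∑' i, c i * u i| ≤ M * ∑' i, |u i| := by
  rw [← hu.tsum_mul_left, ← Real.norm_eq_abs]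
  refine tsum_of_norm_bounded (hu.mul_left M).hasSum fun i => ?_
  rw [Real.norm_eq_abs, abs_mul]
  exact mul_le_mul_of_nonneg_right (hM i) (abs_nonneg _)

end WeightedSums

section Simplex

variable {p : ℕ → ℝ}

lemma summable_abs_of_mem_closedSimplex (hp : p ∈ closedSimplex) : Summable fun n => |p n| :=
  summable_abs_iff.mpr hp.1

lemma tsum_abs_of_mem_closedSimplex (hp : p ∈ closedSimplex) : ∑' n, |p n| = 1 := by
  simpa only [abs_of_nonneg (hp.2.1 _)] using hp.2.2

end Simplex

section GradientField

variable {c p q : ℕ → ℝ} {M : ℝ}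

lemma W_eq_mul_sub (c p : ℕ → ℝ) (n : ℕ) : W c p n = p n * (c n - ∑' k, c k * p k) := by
  rw [W]
  ring

lemma abs_tsum_mul_le_of_mem_closedSimplex (hM : ∀ n, |c n| ≤ M) (hp : p ∈ closedSimplex) :
    |∑' k, c k * p k| ≤ M := by
  simpa only [tsum_abs_of_mem_closedSimplex hp, mul_one] using
    abs_tsum_mul_le hM (summable_abs_of_mem_closedSimplex hp)

lemma abs_sub_tsum_mul_le_of_mem_closedSimplex (hM : ∀ n, |c n| ≤ M) (hp : p ∈ closedSimplex)
    (n : ℕ) : |c n - ∑' k, c k * p k| ≤ 2 * M := by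
  linarith [abs_sub (c n) (∑' k, c k * p k), hM n, abs_tsum_mul_le_of_mem_closedSimplex hM hp]

lemma abs_W_le (hM : ∀ n, |c n| ≤ M) (hp : p ∈ closedSimplex) (n : ℕ) :
    |W c p n| ≤ 2 * M * p n := by
  rw [W_eq_mul_sub, abs_mul, abs_of_nonneg (hp.2.1 n), mul_comm (2 * M)]
  exact mul_le_mul_of_nonneg_left (abs_sub_tsum_mul_le_of_mem_closedSimplex hM hp n) (hp.2.1 n)

lemma abs_tsum_mul_sub_tsum_mul_le (hM : ∀ n, |c n| ≤ M) (hp : p ∈ closedSimplex)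
    (hq : q ∈ closedSimplex) :
    |∑' k, c k * p k - ∑' k, c k * q k| ≤ M * ∑' k, |p k - q k| := by
  have hpq : Summable fun k => |p k - q k| := (hp.1.sub hq.1).abs
  rw [← (summable_mul_of_abs_le hM (summable_abs_of_mem_closedSimplex hp)).tsum_sub
    (summable_mul_of_abs_le hM (summable_abs_of_mem_closedSimplex hq))]
  simpa only [mul_sub] using abs_tsum_mul_le hM hpq

lemma abs_W_sub_W_le (hM : ∀ n, |c n| ≤ M) (hp : p ∈ closedSimplex) (hq : q ∈ closedSimplex)
    (n : ℕ) :
    |W c p n - W c q n| ≤ 2 * M * |p n - q n| + M * (∑' k, |p k - q k|) * q n := by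
  set Sp := ∑' k, c k * p k
  set Sq := ∑' k, c k * q k
  have hsplit : W c p n - W c q n = (p n - q n) * (c n - Sp) - (Sp - Sq) * q n := by
    rw [W_eq_mul_sub, W_eq_mul_sub]
    ring
  have h₁ : |(p n - q n) * (c n - Sp)| ≤ 2 * M * |p n - q n| := by
    rw [abs_mul, mul_comm (2 * M)]
    exact mul_le_mul_of_nonneg_left (abs_sub_tsum_mul_le_of_mem_closedSimplex hM hp n)
      (abs_nonneg _)
  have h₂ : |(Sp - Sq) * q n| ≤ M * (∑' k, |p k - q k|) * q n := by
    rw [abs_mul, abs_of_nonneg (hq.2.1 n)]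
    exact mul_le_mul_of_nonneg_right (abs_tsum_mul_sub_tsum_mul_le hM hp hq) (hq.2.1 n)
  rw [hsplit]
  linarith [abs_sub ((p n - q n) * (c n - Sp)) ((Sp - Sq) * q n)]

lemma tsum_abs_W_sub_W_le (hM : ∀ n, |c n| ≤ M) (hp : p ∈ closedSimplex)
    (hq : q ∈ closedSimplex) :
    ∑' n, |W c p n - W c q n| ≤ 3 * M * ∑' n, |p n - q n| := by
  set D := ∑' n, |p n - q n|
  have hD : Summable fun n => 2 * M * |p n - q n| := ((hp.1.sub hq.1).abs).mul_left _
  have hQ : Summable fun n => M * D * q n := hq.1.mul_left _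
  have hbound := abs_W_sub_W_le hM hp hq
  calc ∑' n, |W c p n - W c q n|
      ≤ ∑' n, (2 * M * |p n - q n| + M * D * q n) :=
        (Summable.of_nonneg_of_le (fun _ => abs_nonneg _) hbound (hD.add hQ)).tsum_le_tsum
          hbound (hD.add hQ)
    _ = 2 * M * D + M * D * ∑' n, q n := by
        rw [hD.tsum_add hQ, tsum_mul_left, tsum_mul_left]
    _ = 3 * M * D := by
        rw [hq.2.2]
        ring

end GradientField

/-- for `(c_n) ∈ ℓ²`, `W_c(p) ∈ ℓ¹` for every `p ∈ Δ̄`, and `W_c`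
satisfies the global Lipschitz estimate
`‖W_c(p) − W_c(q)‖_{ℓ¹} ≤ 3 (sup_n |c_n|) ‖p − q‖_{ℓ¹}`. -/
theorem gradient_field_lipschitz (c : ℕ → ℝ) (hc : Summable (fun n => c n ^ 2)) :
    (∀ p ∈ closedSimplex, Summable (fun n => |W c p n|)) ∧
    ∀ p ∈ closedSimplex, ∀ q ∈ closedSimplex,
      (∑' n, |W c p n - W c q n|) ≤ 3 * (⨆ n, |c n|) * ∑' n, |p n - q n| := by
  have hM : ∀ n, |c n| ≤ ⨆ n, |c n| := le_ciSup (bddAbove_range_abs_of_summable_sq hc)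
  refine ⟨fun p hp => ?_, fun p hp q hq => tsum_abs_W_sub_W_le hM hp hq⟩
  exact Summable.of_nonneg_of_le (fun _ => abs_nonneg _) (abs_W_le hM hp) (hp.1.mul_left _)
end

section
/- Fix q ∈ (1, ∞) and let x : (a,b) → ℓ^q(ℝ) be a differentiable curve with values in 𝒰_q (i.e. ‖x(t)‖_{ℓ^q} = 1 and x_n(t) > 0 for all n, t). Define p(t) := (x_n(t)^q) and v(t) := (q·x_n(t)^{q−1}·x_n'(t)). Then p(t) ∈ Δ for all t, v(t) ∈ ℓ¹ with ∑_n v_n(t) = 0, the sequence (v_n(t)·p_n(t)^{1/q − 1}) lies in ℓ^q, and the ℓ^q-Fisher–Rao Finsler norm satisfies F^q_{p(t)}(v(t)) := (∑_{n=0}^∞ |v_n(t)/p_n(t)|^q · p_n(t))^{1/q} = q · ‖x'(t)‖_{ℓ^q} for every t. (This is the infinitesimal form of the statement that the q-root transform is, up to the factor q, an isometry between (Δ^q, F^q) and (𝒰_q, ‖·‖_{ℓ^q}).) -/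
theorem Real.rpow_rpow_one_div_sub_one {x : ℝ} (hx : 0 ≤ x) {q : ℝ} (hq : q ≠ 0) :
    (x ^ q) ^ (1 / q - 1) = (x ^ (q - 1))⁻¹ := by
  rw [← Real.rpow_mul hx, ← Real.rpow_neg hx]
  congr 1
  field_simp
  ring

theorem Real.abs_div_rpow_mul_rpow {x : ℝ} (hx : 0 < x) (y q : ℝ) :
    |y / x| ^ q * x ^ q = |y| ^ q := by
  rw [abs_div, abs_of_pos hx, Real.div_rpow (abs_nonneg y) hx.le,
    div_mul_cancel₀ _ (Real.rpow_pos_of_pos hx q).ne']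

namespace lp

open scoped ENNReal

variable {ι : Type*}

section Pairing

variable {p p' : ℝ≥0∞}

theorem summable_mul_apply (hpp' : p'.toReal.HolderConjugate p.toReal)
    (y : lp (fun _ : ι => ℝ) p') (z : lp (fun _ : ι => ℝ) p) :
    Summable fun i => y i * z i :=
  Summable.of_norm <| (lp.summable_mul hpp' y z).congr fun _ => (norm_mul _ _).symm

theorem norm_tsum_mul_apply_le (hpp' : p'.toReal.HolderConjugate p.toReal)
    (y : lp (fun _ : ι => ℝ) p') (z : lp (fun _ : ι => ℝ) p) :
    ‖∑' i, y i * z i‖ ≤ ‖y‖ * ‖z‖ :=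
  calc ‖∑' i, y i * z i‖ ≤ ∑' i, ‖y i * z i‖ :=
        norm_tsum_le_tsum_norm <| (lp.summable_mul hpp' y z).congr fun _ => (norm_mul _ _).symm
    _ = ∑' i, ‖y i‖ * ‖z i‖ := tsum_congr fun _ => norm_mul _ _
    _ ≤ ‖y‖ * ‖z‖ := lp.tsum_mul_le_mul_norm' hpp' y z

noncomputable def pairing [Fact (1 ≤ p)] (hpp' : p'.toReal.HolderConjugate p.toReal)
    (y : lp (fun _ : ι => ℝ) p') :
    lp (fun _ : ι => ℝ) p →L[ℝ] ℝ :=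
  LinearMap.mkContinuous
    { toFun := fun z => ∑' i, y i * z i
      map_add' := fun z w => by
        simp only [lp.coeFn_add, Pi.add_apply, mul_add]
        exact (summable_mul_apply hpp' y z).tsum_add (summable_mul_apply hpp' y w)
      map_smul' := fun c z => by
        simp only [lp.coeFn_smul, Pi.smul_apply, smul_eq_mul, RingHom.id_apply,
          ← tsum_mul_left, mul_left_comm] }
    ‖y‖ (norm_tsum_mul_apply_le hpp' y)

theorem pairing_apply [Fact (1 ≤ p)] (hpp' : p'.toReal.HolderConjugate p.toReal)
    (y : lp (fun _ : ι => ℝ) p') (z : lp (fun _ : ι => ℝ) p) : pairing hpp' y z = ∑' i, y i * z i :=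
  rfl

end Pairing

section RealExponent

variable {q : ℝ}

theorem norm_rpow_eq_tsum_abs_rpow (hq : 0 < q) (f : lp (fun _ : ι => ℝ) (ENNReal.ofReal q)) :
    ‖f‖ ^ q = ∑' i, |f i| ^ q := by
  have h := lp.norm_rpow_eq_tsum (by rwa [ENNReal.toReal_ofReal hq.le]) f
  simpa only [ENNReal.toReal_ofReal hq.le, Real.norm_eq_abs] using h

theorem summable_abs_rpow (hq : 0 < q) (f : lp (fun _ : ι => ℝ) (ENNReal.ofReal q)) :
    Summable fun i => |f i| ^ q := by
  have h := (lp.memℓp f).summable (by rwa [ENNReal.toReal_ofReal hq.le])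
  simpa only [ENNReal.toReal_ofReal hq.le, Real.norm_eq_abs] using h

theorem norm_eq_one_of_tsum_abs_rpow_eq_one (hq : 0 < q)
    {f : lp (fun _ : ι => ℝ) (ENNReal.ofReal q)} (hf : ∑' i, |f i| ^ q = 1) : ‖f‖ = 1 := by
  rw [← Real.rpow_left_inj (norm_nonneg' f) zero_le_one hq.ne', Real.one_rpow,
    norm_rpow_eq_tsum_abs_rpow hq, hf]

theorem holderConjugate_toReal_ofReal_conjExponent (hq : 1 < q) :
    (ENNReal.ofReal q.conjExponent).toReal.HolderConjugate (ENNReal.ofReal q).toReal := by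
  have hconj := Real.HolderConjugate.conjExponent hq
  rw [ENNReal.toReal_ofReal hconj.nonneg, ENNReal.toReal_ofReal hconj.symm.nonneg]
  exact hconj.symm

theorem memℓp_abs_rpow_sub_one (hq : 1 < q) (f : lp (fun _ : ι => ℝ) (ENNReal.ofReal q)) :
    Memℓp (fun i => |f i| ^ (q - 1)) (ENNReal.ofReal q.conjExponent) := by
  have hconj := Real.HolderConjugate.conjExponent hq
  refine memℓp_gen ?_
  simp only [ENNReal.toReal_ofReal hconj.symm.nonneg, Real.norm_eq_abs, abs_abs,
    Real.abs_rpow_of_nonneg (abs_nonneg _), ← Real.rpow_mul (abs_nonneg _),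
    hconj.sub_one_mul_conj]
  exact summable_abs_rpow (by linarith) f

/-- For `f ≥ 0` this represents the norming functional of `f` (see
`pairing_absRpowSubOne_self`). -/
noncomputable def absRpowSubOne (hq : 1 < q) (f : lp (fun _ : ι => ℝ) (ENNReal.ofReal q)) :
    lp (fun _ : ι => ℝ) (ENNReal.ofReal q.conjExponent) :=
  ⟨fun i => |f i| ^ (q - 1), memℓp_abs_rpow_sub_one hq f⟩

theorem absRpowSubOne_apply (hq : 1 < q) (f : lp (fun _ : ι => ℝ) (ENNReal.ofReal q)) (i : ι) :
    absRpowSubOne hq f i = |f i| ^ (q - 1) :=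
  rfl

theorem norm_absRpowSubOne (hq : 1 < q) (f : lp (fun _ : ι => ℝ) (ENNReal.ofReal q)) :
    ‖absRpowSubOne hq f‖ = ‖f‖ ^ (q - 1) := by
  have hconj := Real.HolderConjugate.conjExponent hq
  rw [← Real.rpow_left_inj (norm_nonneg' _) (Real.rpow_nonneg (norm_nonneg' f) _)
      hconj.symm.ne_zero,
    norm_rpow_eq_tsum_abs_rpow hconj.symm.pos, ← Real.rpow_mul (norm_nonneg' f),
    hconj.sub_one_mul_conj, norm_rpow_eq_tsum_abs_rpow hconj.pos]
  refine tsum_congr fun i => ?_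
  rw [absRpowSubOne_apply, Real.abs_rpow_of_nonneg (abs_nonneg _), abs_abs,
    ← Real.rpow_mul (abs_nonneg _), hconj.sub_one_mul_conj]

theorem pairing_absRpowSubOne_self (hq : 1 < q) [Fact (1 ≤ ENNReal.ofReal q)]
    {f : lp (fun _ : ι => ℝ) (ENNReal.ofReal q)} (hf : ∀ i, 0 ≤ f i) :
    pairing (holderConjugate_toReal_ofReal_conjExponent hq) (absRpowSubOne hq f) f =
      ‖absRpowSubOne hq f‖ * ‖f‖ := by
  have hq1 : q - 1 + 1 ≠ 0 := by linarith
  rw [norm_absRpowSubOne, ← Real.rpow_add_one' (norm_nonneg' f) hq1, sub_add_cancel,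
    norm_rpow_eq_tsum_abs_rpow (by linarith), pairing_apply]
  refine tsum_congr fun i => ?_
  rw [absRpowSubOne_apply, abs_of_nonneg (hf i), ← Real.rpow_add_one' (hf i) hq1, sub_add_cancel]

theorem summable_abs_rpow_sub_one_mul_abs (hq : 1 < q)
    (f g : lp (fun _ : ι => ℝ) (ENNReal.ofReal q)) :
    Summable fun i => |f i| ^ (q - 1) * |g i| := by
  simpa only [Real.norm_eq_abs, absRpowSubOne_apply, Real.abs_rpow_of_nonneg (abs_nonneg _),
    abs_abs] using
    lp.summable_mul (holderConjugate_toReal_ofReal_conjExponent hq) (absRpowSubOne hq f) g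

theorem tsum_rpow_sub_one_mul_eq_zero_of_isLocalMax_norm (hq : 1 < q)
    [Fact (1 ≤ ENNReal.ofReal q)] {x : ℝ → lp (fun _ : ι => ℝ) (ENNReal.ofReal q)}
    {x' : lp (fun _ : ι => ℝ) (ENNReal.ofReal q)} {t : ℝ} (hx : HasDerivAt x x' t)
    (hmax : IsLocalMax (fun s => ‖x s‖) t) (hnonneg : ∀ i, 0 ≤ x t i) :
    ∑' i, x t i ^ (q - 1) * x' i = 0 := by
  set y := absRpowSubOne hq (x t)
  set L := pairing (holderConjugate_toReal_ofReal_conjExponent hq) y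
  have hLmax : IsLocalMax (fun s => L (x s)) t := by
    filter_upwards [hmax] with s hs
    calc L (x s) ≤ ‖y‖ * ‖x s‖ := (le_abs_self _).trans <|
        norm_tsum_mul_apply_le (holderConjugate_toReal_ofReal_conjExponent hq) y (x s)
      _ ≤ ‖y‖ * ‖x t‖ := mul_le_mul_of_nonneg_left hs (norm_nonneg' y)
      _ = L (x t) := (pairing_absRpowSubOne_self hq hnonneg).symm
  have hL' : L x' = 0 := hLmax.hasDerivAt_eq_zero (L.hasFDerivAt.comp_hasDerivAt t hx)
  simpa only [L, pairing_apply, y, absRpowSubOne_apply, abs_of_nonneg (hnonneg _)] using hL'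

end RealExponent

end lp

/-- fix `q ∈ (1,∞)` and let `x : (a,b) → ℓ^q(ℝ)` be a differentiable
curve with values in `𝒰_q`. With `p(t) := (x_n(t)^q)` and
`v(t) := (q x_n(t)^{q−1} x_n'(t))`, one has `p(t) ∈ Δ`, `v(t) ∈ ℓ¹` with
`∑ v_n(t) = 0`, `(v_n(t) p_n(t)^{1/q−1}) ∈ ℓ^q`, and the ℓ^q-Fisher–Rao Finsler norm
satisfies `F^q_{p(t)}(v(t)) = (∑ |v_n/p_n|^q p_n)^{1/q} = q ‖x'(t)‖_{ℓ^q}`.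
(Here `x ^ q` is the real power `Real.rpow`; the instance hypothesis
`Fact (1 ≤ ENNReal.ofReal q)` follows from `1 < q` and makes `ℓ^q` a normed space.) -/
theorem qRootTransform_isometry_infinitesimal (q : ℝ) (hq : 1 < q)
    [Fact (1 ≤ ENNReal.ofReal q)] (a b : ℝ)
    (x x' : ℝ → lp (fun _ : ℕ => ℝ) (ENNReal.ofReal q))
    (hderiv : ∀ t ∈ Set.Ioo a b, HasDerivAt x (x' t) t)
    (hpos : ∀ t ∈ Set.Ioo a b, ∀ n, 0 < x t n)
    (hsph : ∀ t ∈ Set.Ioo a b, ∑' n, (x t n) ^ q = 1) :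
    ∀ t ∈ Set.Ioo a b,
      (fun n => (x t n) ^ q) ∈ simplex ∧
      Summable (fun n => |q * (x t n) ^ (q - 1) * x' t n|) ∧
      (∑' n, q * (x t n) ^ (q - 1) * x' t n) = 0 ∧
      Summable (fun n => |q * (x t n) ^ (q - 1) * x' t n * ((x t n) ^ q) ^ (1 / q - 1)| ^ q) ∧
      (∑' n, |q * (x t n) ^ (q - 1) * x' t n / (x t n) ^ q| ^ q * (x t n) ^ q) ^ (1 / q)
        = q * ‖x' t‖ := by
  intro t ht
  have hq0 : 0 < q := by linarith
  have hxt : ∀ n, 0 < x t n := hpos t ht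
  have hnorm : ∀ s ∈ Set.Ioo a b, ‖x s‖ = 1 := fun s hs =>
    lp.norm_eq_one_of_tsum_abs_rpow_eq_one hq0 <| by
      simpa only [abs_of_pos (hpos s hs _)] using hsph s hs
  have hmax : IsLocalMax (fun s => ‖x s‖) t := by
    filter_upwards [Ioo_mem_nhds ht.1 ht.2] with s hs
    rw [hnorm s hs, hnorm t ht]
  have horth : ∑' n, x t n ^ (q - 1) * x' t n = 0 :=
    lp.tsum_rpow_sub_one_mul_eq_zero_of_isLocalMax_norm hq (hderiv t ht) hmax fun n => (hxt n).le
  have hv_mul : ∀ n, q * x t n ^ (q - 1) * x' t n * (x t n ^ q) ^ (1 / q - 1) = (q • x' t) n :=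
    fun n => by
      rw [Real.rpow_rpow_one_div_sub_one (hxt n).le hq0.ne', lp.coeFn_smul, Pi.smul_apply,
        smul_eq_mul]
      field_simp [(Real.rpow_pos_of_pos (hxt n) (q - 1)).ne']
  have hv_div : ∀ n, q * x t n ^ (q - 1) * x' t n / x t n ^ q = (q • x' t) n / x t n :=
    fun n => by
      rw [Real.rpow_sub_one (hxt n).ne', lp.coeFn_smul, Pi.smul_apply, smul_eq_mul]
      field_simp [(Real.rpow_pos_of_pos (hxt n) q).ne']
  refine ⟨⟨?_, fun n => Real.rpow_pos_of_pos (hxt n) q, hsph t ht⟩, ?_, ?_, ?_, ?_⟩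
  · simpa only [abs_of_pos (hxt _)] using lp.summable_abs_rpow hq0 (x t)
  · refine ((lp.summable_abs_rpow_sub_one_mul_abs hq (x t) (x' t)).mul_left q).congr fun n => ?_
    rw [abs_mul, abs_mul, abs_of_pos hq0, abs_of_pos (Real.rpow_pos_of_pos (hxt n) _),
      abs_of_pos (hxt n), mul_assoc]
  · simp only [mul_assoc, tsum_mul_left, horth, mul_zero]
  · simpa only [hv_mul] using lp.summable_abs_rpow hq0 (q • x' t)
  · rw [tsum_congr fun n => by rw [hv_div, Real.abs_div_rpow_mul_rpow (hxt n)],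
      ← lp.norm_rpow_eq_tsum_abs_rpow hq0, norm_smul, Real.norm_of_nonneg hq0.le, one_div,
      Real.rpow_rpow_inv (by positivity) hq0.ne']
end

section
/- Let (c_n) ∈ ℓ²(ℝ) be strictly monotonically decreasing, let x(0) ∈ 𝒰, and define x(t) := Φ(p(t)) where p(t) is the ℓ²-Fisher–Rao gradient flow p_n(t) = p_n(0) e^{c_n t} / ∑_k p_k(0) e^{c_k t} with p(0) = (x_n(0)²). Then x(t) ∈ 𝒰 for all t ≥ 0, the value of the Hamiltonian along the curve satisfies H_c(x(t)) = ∑_{n=0}^∞ c_n x_n(t)² = ∑_{n=0}^∞ c_n p_n(t), and the limit lim_{t→∞} (x_n(t)²) exists in ℓ¹ and equals e_0 = (1,0,0,…), which maximizes p ↦ ∑ c_n p_n over the closed simplex Δ̄. -/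
/-- for strictly decreasing `(c_n) ∈ ℓ²` and `x(0) ∈ 𝒰`, setting
`p(0) = (x_n(0)²)` and `x(t) = Φ(p(t)) = (√p_n(t))` along the ℓ²-Fisher–Rao gradient
flow, one has `x(t) ∈ 𝒰` for all `t ≥ 0`, the Hamiltonian along the curve satisfies
`H_c(x(t)) = ∑ c_n x_n(t)² = ∑ c_n p_n(t)`, and `(x_n(t)²)` converges in ℓ¹ to
`e₀ = (1,0,0,…)`, which maximizes `p ↦ ∑ c_n p_n` over `Δ̄`. -/
theorem hamiltonian_gradient_flow_solves_LP (c x0 : ℕ → ℝ)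
    (hc : Summable (fun n => c n ^ 2)) (hmono : StrictAnti c)
    (hx0 : x0 ∈ posSphere) :
    (∀ t : ℝ, 0 ≤ t →
      (fun n => Real.sqrt (flow c (fun k => x0 k ^ 2) t n)) ∈ posSphere) ∧
    (∀ t : ℝ, 0 ≤ t →
      (∑' n, c n * (Real.sqrt (flow c (fun k => x0 k ^ 2) t n)) ^ 2) =
        ∑' n, c n * flow c (fun k => x0 k ^ 2) t n) ∧
    Filter.Tendsto (fun t => ∑' n, |flow c (fun k => x0 k ^ 2) t n - e0 n|)
      Filter.atTop (nhds 0) ∧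
    (∀ r ∈ closedSimplex, (∑' n, c n * r n) ≤ ∑' n, c n * e0 n) := by
  obtain ⟨hx0sum, hx0pos, hx0one⟩ := hx0
  set p0 : ℕ → ℝ := fun k => x0 k ^ 2 with hp0def
  have hp0pos : ∀ n, 0 < p0 n := fun n => pow_pos (hx0pos n) 2
  have hp0sum : Summable p0 := hx0sum
  have hp0one : ∑' n, p0 n = 1 := hx0one
  -- c tends to 0 and is nonnegative
  have hc2 : Filter.Tendsto (fun n => c n ^ 2) Filter.atTop (nhds 0) :=
    hc.tendsto_atTop_zero
  have hcabs : Filter.Tendsto (fun n => |c n|) Filter.atTop (nhds 0) := by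
    have h := (Real.continuous_sqrt.tendsto 0).comp hc2
    simp only [Function.comp_def, Real.sqrt_sq_eq_abs, Real.sqrt_zero] at h
    exact h
  have hc0 : Filter.Tendsto c Filter.atTop (nhds 0) :=
    (tendsto_zero_iff_abs_tendsto_zero c).mpr hcabs
  have hcnonneg : ∀ n, 0 ≤ c n := fun n => hmono.antitone.le_of_tendsto hc0 n
  have hcle : ∀ k, c k ≤ c 0 := fun k => hmono.antitone (Nat.zero_le k)
  -- summability of the denominator sum
  have hSsum : ∀ t : ℝ, 0 ≤ t → Summable (fun k => p0 k * Real.exp (c k * t)) := by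
    intro t ht
    refine Summable.of_nonneg_of_le (fun k => by positivity) (fun k => ?_)
      (hp0sum.mul_right (Real.exp (c 0 * t)))
    exact mul_le_mul_of_nonneg_left
      (Real.exp_le_exp.2 (mul_le_mul_of_nonneg_right (hcle k) ht)) (hp0pos k).le
  have hSpos : ∀ t : ℝ, 0 ≤ t → 0 < ∑' k, p0 k * Real.exp (c k * t) := by
    intro t ht
    exact Summable.tsum_pos (hSsum t ht) (fun k => by positivity) 0
      (mul_pos (hp0pos 0) (Real.exp_pos _))
  -- basic facts about the flow
  have hflowpos : ∀ t : ℝ, 0 ≤ t → ∀ n, 0 < flow c p0 t n := by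
    intro t ht n
    exact div_pos (mul_pos (hp0pos n) (Real.exp_pos _)) (hSpos t ht)
  have hflowsum : ∀ t : ℝ, 0 ≤ t → Summable (flow c p0 t) := by
    intro t ht
    exact (hSsum t ht).div_const _
  have hflowone : ∀ t : ℝ, 0 ≤ t → ∑' n, flow c p0 t n = 1 := by
    intro t ht
    unfold flow
    rw [tsum_div_const, div_self (hSpos t ht).ne']
  refine ⟨?_, ?_, ?_, ?_⟩
  · -- Part 1
    intro t ht
    refine ⟨?_, fun n => Real.sqrt_pos.2 (hflowpos t ht n), ?_⟩
    · have : (fun n => (Real.sqrt (flow c p0 t n)) ^ 2) = flow c p0 t := by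
        funext n; exact Real.sq_sqrt (hflowpos t ht n).le
      rw [this]; exact hflowsum t ht
    · have : (fun n => (Real.sqrt (flow c p0 t n)) ^ 2) = flow c p0 t := by
        funext n; exact Real.sq_sqrt (hflowpos t ht n).le
      rw [this]; exact hflowone t ht
  · -- Part 2
    intro t ht
    exact tsum_congr fun n => by rw [Real.sq_sqrt (hflowpos t ht n).le]
  · -- Part 3
    set q : ℝ → ℕ → ℝ := fun t k => p0 k * Real.exp ((c k - c 0) * t) with hqdef
    have hQsum : ∀ t : ℝ, 0 ≤ t → Summable (q t) := by
      intro t ht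
      refine Summable.of_nonneg_of_le (fun k => by positivity) (fun k => ?_) hp0sum
      have : (c k - c 0) * t ≤ 0 :=
        mul_nonpos_of_nonpos_of_nonneg (by linarith [hcle k]) ht
      calc p0 k * Real.exp ((c k - c 0) * t) ≤ p0 k * 1 :=
            mul_le_mul_of_nonneg_left (Real.exp_le_one_iff.2 this) (hp0pos k).le
        _ = p0 k := mul_one _
    have hQ : Filter.Tendsto (fun t => ∑' k, q t k) Filter.atTop (nhds (p0 0)) := by
      have := tendsto_tsum_of_dominated_convergence (f := q)
        (g := fun k => if k = 0 then p0 0 else 0) (bound := p0) (𝓕 := Filter.atTop)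
        hp0sum ?_ ?_
      · rwa [tsum_ite_eq] at this
      · intro k
        rcases Nat.eq_zero_or_pos k with hk | hk
        · subst hk
          simp only [hqdef, sub_self, zero_mul, Real.exp_zero, mul_one, if_pos rfl]
          exact tendsto_const_nhds
        · have hk0 : k ≠ 0 := hk.ne'
          simp only [if_neg hk0]
          have h1 : Filter.Tendsto (fun t : ℝ => (c 0 - c k) * t) Filter.atTop
              Filter.atTop :=
            Filter.Tendsto.const_mul_atTop (by linarith [hmono hk]) Filter.tendsto_id
          have h2 : Filter.Tendsto (fun t : ℝ => Real.exp ((c k - c 0) * t))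
              Filter.atTop (nhds 0) := by
            have h3 := Real.tendsto_exp_atBot.comp (Filter.tendsto_neg_atTop_atBot.comp h1)
            simp only [Function.comp_def] at h3
            exact h3.congr fun x => by rw [show -((c 0 - c k) * x) = (c k - c 0) * x by ring]
          have := h2.const_mul (p0 k)
          simpa using this
      · filter_upwards [Filter.eventually_ge_atTop (0 : ℝ)] with t ht
        intro k
        have hnn : (0:ℝ) ≤ q t k := by positivity
        rw [Real.norm_eq_abs, abs_of_nonneg hnn]
        have : (c k - c 0) * t ≤ 0 :=
          mul_nonpos_of_nonpos_of_nonneg (by linarith [hcle k]) ht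
        calc p0 k * Real.exp ((c k - c 0) * t) ≤ p0 k * 1 :=
              mul_le_mul_of_nonneg_left (Real.exp_le_one_iff.2 this) (hp0pos k).le
          _ = p0 k := mul_one _
    -- The flow rewritten with q
    have hflow_eq : ∀ t : ℝ, 0 ≤ t → ∀ n, flow c p0 t n = q t n / ∑' k, q t k := by
      intro t ht n
      have hfact : ∀ k, p0 k * Real.exp (c k * t)
          = Real.exp (c 0 * t) * q t k := by
        intro k
        rw [hqdef]
        rw [show c k * t = c 0 * t + (c k - c 0) * t by ring, Real.exp_add]
        ring
      unfold flow
      rw [tsum_congr hfact, tsum_mul_left, hfact n]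
      rw [mul_div_mul_left _ _ (Real.exp_pos _).ne']
    have hflow0 : Filter.Tendsto (fun t => flow c p0 t 0) Filter.atTop (nhds 1) := by
      have h : Filter.Tendsto (fun t => p0 0 / ∑' k, q t k) Filter.atTop
          (nhds (p0 0 / p0 0)) := tendsto_const_nhds.div hQ (hp0pos 0).ne'
      rw [div_self (hp0pos 0).ne'] at h
      refine h.congr' ?_
      filter_upwards [Filter.eventually_ge_atTop (0 : ℝ)] with t ht
      rw [hflow_eq t ht 0]
      simp [hqdef]
    have he0sum : Summable e0 := (hasSum_ite_eq (0 : ℕ) (1 : ℝ)).summable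
    -- key identity for the ℓ¹ distance
    have hkey : ∀ t : ℝ, 0 ≤ t →
        ∑' n, |flow c p0 t n - e0 n| = 2 * (1 - flow c p0 t 0) := by
      intro t ht
      set p := flow c p0 t with hpdef
      have hp0le : p 0 ≤ 1 := by
        rw [← hflowone t ht]
        exact Summable.le_tsum (hflowsum t ht) 0 (fun i _ => (hflowpos t ht i).le)
      have habs_sum : Summable (fun n => |p n - e0 n|) :=
        ((hflowsum t ht).sub he0sum).abs
      rw [Summable.tsum_eq_zero_add habs_sum]
      have htail : ∀ n : ℕ, |p (n + 1) - e0 (n + 1)| = p (n + 1) := by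
        intro n
        have : e0 (n + 1) = 0 := by simp [e0]
        rw [this, sub_zero, abs_of_nonneg (hflowpos t ht (n + 1)).le]
      rw [tsum_congr htail]
      have hsum1 : p 0 + ∑' n, p (n + 1) = 1 := by
        rw [← Summable.tsum_eq_zero_add (hflowsum t ht)]
        exact hflowone t ht
      have he00 : e0 0 = 1 := by simp [e0]
      rw [he00, abs_sub_comm, abs_of_nonneg (by linarith)]
      linarith
    have hlim : Filter.Tendsto (fun t => 2 * (1 - flow c p0 t 0)) Filter.atTop
        (nhds 0) := by
      have := ((tendsto_const_nhds (x := (1:ℝ)) (f := Filter.atTop)).sub hflow0).const_mul (2 : ℝ)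
      simpa using this
    refine hlim.congr' ?_
    filter_upwards [Filter.eventually_ge_atTop (0 : ℝ)] with t ht
    exact (hkey t ht).symm
  · -- Part 4
    rintro r ⟨hrsum, hrpos, hrone⟩
    have hce0 : ∑' n, c n * e0 n = c 0 := by
      have h : (fun n => c n * e0 n) = fun n => if n = 0 then c 0 else 0 := by
        funext n
        by_cases hn : n = 0 <;> simp [e0, hn]
      rw [h, tsum_ite_eq]
    rw [hce0]
    have hsum1 : Summable (fun n => c n * r n) :=
      Summable.of_nonneg_of_le (fun n => mul_nonneg (hcnonneg n) (hrpos n))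
        (fun n => mul_le_mul_of_nonneg_right (hcle n) (hrpos n))
        (hrsum.mul_left (c 0))
    calc ∑' n, c n * r n ≤ ∑' n, c 0 * r n :=
          Summable.tsum_le_tsum (fun n => mul_le_mul_of_nonneg_right (hcle n) (hrpos n))
            hsum1 (hrsum.mul_left _)
      _ = c 0 := by rw [tsum_mul_left, hrone, mul_one]
end
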